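/- Let Ψ ∈ H_M^r and let v ∈ ℤ^d \ {0} with ‖v‖₁ ≤ M. Then the function η ↦ Ψ(η^{0,v}) also belongs to H_M^r, i.e. composition with the tagged-particle jump (shift-and-relabel) map preserves rank-r structure. -/
import Mathlib


open Finset

noncomputable section

namespace SelfDiffusion

/-- The box `{-M,…,M}^d ⊂ ℤ^d`. -/
def box (d M : ℕ) : Finset (Fin d → ℤ) :=
  Fintype.piFinset fun _ => Finset.Icc (-(M : ℤ)) (M : ℤ)

/-- The set of sites `S_M = {-M,…,M}^d \ {0}`. -/
def SM (d M : ℕ) : Finset (Fin d → ℤ) := (box d M).erase 0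

/-- A site, i.e. an element of `S_M`. -/
abbrev Site (d M : ℕ) := {s : Fin d → ℤ // s ∈ SM d M}

/-- A particle configuration `η ∈ {0,1}^{S_M}`. -/
abbrev Cfg (d M : ℕ) := Site d M → Fin 2

/-- The representative of `x` in `{-M,…,M}` modulo `2M+1`. -/
def redInt (M : ℕ) (x : ℤ) : ℤ := (x + M) % (2 * M + 1) - M

/-- The representative of `s ∈ ℤ^d` in the box `{-M,…,M}^d`, coordinatewise mod `2M+1`. -/
def redVec (d M : ℕ) (s : Fin d → ℤ) : Fin d → ℤ := fun i => redInt M (s i)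

lemma redInt_mem (M : ℕ) (x : ℤ) : redInt M x ∈ Finset.Icc (-(M : ℤ)) (M : ℤ) := by
  have h1 : (0 : ℤ) < 2 * M + 1 := by positivity
  have h2 := Int.emod_nonneg (x + M) (by omega : (2 * (M : ℤ) + 1) ≠ 0)
  have h3 := Int.emod_lt_of_pos (x + (M : ℤ)) h1
  rw [Finset.mem_Icc, redInt]
  omega

lemma redVec_mem_box (d M : ℕ) (s : Fin d → ℤ) : redVec d M s ∈ box d M := by
  rw [box, Fintype.mem_piFinset]
  exact fun i => redInt_mem M (s i)

/-- The periodic extension `η̃` of a configuration `η`, evaluated at `w ∈ ℤ^d`. -/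
def extCfg {d M : ℕ} (η : Cfg d M) (w : Fin d → ℤ) : Fin 2 :=
  if h : redVec d M w = 0 then 1
  else η ⟨redVec d M w, Finset.mem_erase.mpr ⟨h, redVec_mem_box d M w⟩⟩

/-- The swapped configuration `η^{y,z}`. -/
def swap {d M : ℕ} (η : Cfg d M) (y z : Fin d → ℤ) : Cfg d M := fun s =>
  if s.val = redVec d M y then extCfg η z
  else if s.val = redVec d M z then extCfg η y
  else η s

/-- The shifted configuration `η^{0,w}` (tagged-particle jump in direction `w`). -/
def shift {d M : ℕ} (η : Cfg d M) (w : Fin d → ℤ) : Cfg d M := fun s =>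
  if s.val = -w then 0 else extCfg η (s.val + w)

/-- Number of occupied sites of a configuration. -/
def nPart {d M : ℕ} (η : Cfg d M) : ℕ := ∑ s, (η s : ℕ)

/-- `C_{M,ℓ}`: configurations with exactly `ℓ` occupied sites. -/
def CSet (d M : ℕ) (ℓ : ℕ) : Finset (Cfg d M) :=
  Finset.univ.filter fun η => nPart η = ℓ

/-- ℓ¹ norm on `ℤ^d`. -/
def oneNorm (d : ℕ) (v : Fin d → ℤ) : ℤ := ∑ i, |v i|

/-- Dot product `u · v`. -/
def dotR (d : ℕ) (u : Fin d → ℝ) (v : Fin d → ℤ) : ℝ := ∑ i, u i * (v i : ℝ)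

/-- The summand (over `η`) of the functional `A_M^u`. -/
def bracket {d M K : ℕ} (u : Fin d → ℝ) (v : Fin K → Fin d → ℤ) (p : Fin K → ℝ)
    (Ψ : Cfg d M → ℝ) (η : Cfg d M) : ℝ :=
  ∑ k, p k *
    ((1 - ((extCfg η (v k) : ℕ) : ℝ)) *
        (dotR d u (v k) + Ψ (shift η (v k)) - Ψ η) ^ 2
      + (1 / 2) * ∑ y ∈ (SM d M).filter (fun y => y + v k ≠ 0),
          (Ψ (swap η (y + v k) y) - Ψ η) ^ 2)

/-- The functional `A_M^u`. -/
def AM {d M K : ℕ} (u : Fin d → ℝ) (v : Fin K → Fin d → ℤ) (p : Fin K → ℝ)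
    (Ψ : Cfg d M → ℝ) : ℝ :=
  ∑ η : Cfg d M, bracket u v p Ψ η

/-- The functional `A_{M,ℓ}^u`. -/
def AMl {d M K : ℕ} (u : Fin d → ℝ) (v : Fin K → Fin d → ℤ) (p : Fin K → ℝ)
    (ℓ : ℕ) (Ψ : Cfg d M → ℝ) : ℝ :=
  (1 / ((CSet d M ℓ).card : ℝ)) * ∑ η ∈ CSet d M ℓ, bracket u v p Ψ η

/-- `Ψ ∈ H_M^r`: `Ψ` is a sum of `r` pure tensor product (rank-1) functions. -/
def IsRankLE {d M : ℕ} (r : ℕ) (Ψ : Cfg d M → ℝ) : Prop :=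
  ∃ R : Fin r → Site d M → Fin 2 → ℝ, ∀ η, Ψ η = ∑ k, ∏ s, R k s (η s)

lemma redInt_id' (M : ℕ) {x : ℤ} (h1 : -(M:ℤ) ≤ x) (h2 : x ≤ M) : redInt M x = x := by
  unfold redInt
  rw [Int.emod_eq_of_lt (by omega) (by omega)]
  ring

lemma redInt_sub_dvd' (M : ℕ) (x : ℤ) : (2*(M:ℤ)+1) ∣ (redInt M x - x) := by
  refine ⟨-((x + M) / (2*(M:ℤ)+1)), ?_⟩
  have h := Int.emod_def (x + (M:ℤ)) (2*(M:ℤ)+1)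
  unfold redInt
  rw [h]; ring

lemma dvd_of_redInt_eq' (M : ℕ) {x y : ℤ} (h : redInt M x = redInt M y) :
    (2*(M:ℤ)+1) ∣ (x - y) := by
  have h1 := redInt_sub_dvd' M x
  have h2 := redInt_sub_dvd' M y
  have e : x - y = (redInt M y - y) - (redInt M x - x) := by rw [h]; ring
  rw [e]; exact dvd_sub h2 h1

lemma redInt_congr' (M : ℕ) {x y : ℤ} (h : (2*(M:ℤ)+1) ∣ (x - y)) :
    redInt M x = redInt M y := by
  unfold redInt
  have e : (x + (M:ℤ)) % (2*M+1) = (y + M) % (2*M+1) := by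
    rw [Int.emod_eq_emod_iff_emod_sub_eq_zero]
    have : x + (M:ℤ) - (y + M) = x - y := by ring
    rw [this]
    exact Int.emod_eq_zero_of_dvd h
  rw [e]

lemma eq_zero_of_dvd_small' (M : ℕ) {a : ℤ} (h : (2*(M:ℤ)+1) ∣ a)
    (h1 : -(2*(M:ℤ)) ≤ a) (h2 : a ≤ 2*M) : a = 0 := by
  rcases h with ⟨k, hk⟩
  have hM : (0:ℤ) ≤ M := by positivity
  rcases lt_trichotomy k 0 with hk0 | hk0 | hk0
  · exfalso; nlinarith
  · simp [hk, hk0]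
  · exfalso; nlinarith

lemma mem_box_iff' {d M : ℕ} {s : Fin d → ℤ} :
    s ∈ box d M ↔ ∀ i, -(M:ℤ) ≤ s i ∧ s i ≤ M := by
  rw [box, Fintype.mem_piFinset]
  simp [Finset.mem_Icc]

lemma redVec_id' (d M : ℕ) {s : Fin d → ℤ} (h : s ∈ box d M) : redVec d M s = s := by
  funext i
  exact redInt_id' M (mem_box_iff'.mp h i).1 (mem_box_iff'.mp h i).2

lemma redVec_add_redVec' (d M : ℕ) (s w : Fin d → ℤ) :
    redVec d M (redVec d M s + w) = redVec d M (s + w) := by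
  funext i
  apply redInt_congr' M
  have h := redInt_sub_dvd' M (s i)
  have e : (redVec d M s + w) i - (s + w) i = redInt M (s i) - s i := by
    show redInt M (s i) + w i - (s i + w i) = redInt M (s i) - s i
    ring
  rw [e]; exact h

lemma eq_of_redVec_eq' (d M : ℕ) {a b : Fin d → ℤ}
    (h : redVec d M a = redVec d M b)
    (hbound : ∀ i, -(2*(M:ℤ)) ≤ a i - b i ∧ a i - b i ≤ 2*M) : a = b := by
  funext i
  have hd := dvd_of_redInt_eq' M (congrFun h i)
  have h0 := eq_zero_of_dvd_small' M hd (hbound i).1 (hbound i).2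
  omega

/-- composition with the tagged-particle jump map `η ↦ η^{0,v}` preserves the
rank-`r` structure: if `Ψ ∈ H_M^r` then `η ↦ Ψ(η^{0,v})` is in `H_M^r` as well. -/
theorem statement9 (d M : ℕ) (hd : 1 ≤ d) (hM : 1 ≤ M) (r : ℕ)
    (Ψ : Cfg d M → ℝ) (hΨ : IsRankLE r Ψ)
    (v : Fin d → ℤ) (hv0 : v ≠ 0) (hv1 : oneNorm d v ≤ (M : ℤ)) :
    IsRankLE r (fun η : Cfg d M => Ψ (shift η v)) := by
  classical
  obtain ⟨R, hR⟩ := hΨ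
  -- basic facts about v
  have hMle : ∀ i, |v i| ≤ (M:ℤ) := by
    intro i
    calc |v i| ≤ ∑ j, |v j| :=
          Finset.single_le_sum (f := fun j => |v j|) (fun j _ => abs_nonneg _)
            (Finset.mem_univ i)
      _ ≤ M := hv1
  have hvbox : v ∈ box d M := by
    rw [mem_box_iff']; intro i
    have := abs_le.mp (hMle i); exact ⟨this.1, this.2⟩
  have hnvbox : -v ∈ box d M := by
    rw [mem_box_iff']; intro i
    have := abs_le.mp (hMle i)
    constructor <;> simp <;> omega
  have h0box : (0 : Fin d → ℤ) ∈ box d M := by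
    rw [mem_box_iff']; intro i; simp
  have hvSM : v ∈ SM d M := Finset.mem_erase.mpr ⟨hv0, hvbox⟩
  have hnvSM : -v ∈ SM d M := Finset.mem_erase.mpr ⟨neg_ne_zero.mpr hv0, hnvbox⟩
  have hbnd : ∀ {a : Fin d → ℤ}, a ∈ box d M → ∀ i, -(M:ℤ) ≤ a i ∧ a i ≤ M :=
    fun h i => mem_box_iff'.mp h i
  -- membership lemmas
  have hmem1 : ∀ s : Site d M, s.val ≠ -v → redVec d M (s.val + v) ∈ SM d M := by
    intro s hs
    refine Finset.mem_erase.mpr ⟨?_, redVec_mem_box d M _⟩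
    intro h0
    apply hs
    have hsbox : s.val ∈ box d M := Finset.mem_of_mem_erase s.2
    have : s.val + v = 0 := by
      apply eq_of_redVec_eq' d M (by rw [h0, redVec_id' d M h0box])
      intro i
      have h1 := hbnd hsbox i; have h2 := hbnd hvbox i
      simp only [Pi.add_apply, Pi.zero_apply]
      omega
    funext i
    have := congrFun this i
    simp only [Pi.add_apply, Pi.zero_apply, Pi.neg_apply] at this ⊢
    omega
  have hmem3 : ∀ s : Site d M, s.val ≠ v → redVec d M (s.val - v) ∈ SM d M := by
    intro s hs
    refine Finset.mem_erase.mpr ⟨?_, redVec_mem_box d M _⟩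
    intro h0
    apply hs
    have hsbox : s.val ∈ box d M := Finset.mem_of_mem_erase s.2
    have : s.val - v = 0 := by
      apply eq_of_redVec_eq' d M (by rw [h0, redVec_id' d M h0box])
      intro i
      have h1 := hbnd hsbox i; have h2 := hbnd hvbox i
      simp only [Pi.sub_apply, Pi.zero_apply]
      omega
    funext i
    have := congrFun this i
    simp only [Pi.sub_apply, Pi.zero_apply] at this ⊢
    omega
  have hne2 : ∀ s : Site d M, redVec d M (s.val + v) ≠ v := by
    intro s h0
    have hsbox : s.val ∈ box d M := Finset.mem_of_mem_erase s.2
    have hs0 : s.val ≠ 0 := (Finset.mem_erase.mp s.2).1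
    apply hs0
    have : s.val + v = v := by
      apply eq_of_redVec_eq' d M (by rw [h0, redVec_id' d M hvbox])
      intro i
      have h1 := hbnd hsbox i
      simp only [Pi.add_apply]
      omega
    funext i
    have := congrFun this i
    simp only [Pi.add_apply, Pi.zero_apply] at this ⊢
    omega
  have hne4 : ∀ s : Site d M, redVec d M (s.val - v) ≠ -v := by
    intro s h0
    have hsbox : s.val ∈ box d M := Finset.mem_of_mem_erase s.2
    have hs0 : s.val ≠ 0 := (Finset.mem_erase.mp s.2).1
    apply hs0
    have : s.val - v = -v := by
      apply eq_of_redVec_eq' d M (by rw [h0, redVec_id' d M hnvbox])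
      intro i
      have h1 := hbnd hsbox i
      simp only [Pi.sub_apply, Pi.neg_apply]
      omega
    funext i
    have := congrFun this i
    simp only [Pi.sub_apply, Pi.neg_apply, Pi.zero_apply] at this ⊢
    omega
  -- the bijection φ and its inverse ψ
  set φ : Site d M → Site d M := fun s =>
    if h : s.val = -v then ⟨v, hvSM⟩ else ⟨redVec d M (s.val + v), hmem1 s h⟩ with hφ
  set ψ : Site d M → Site d M := fun s =>
    if h : s.val = v then ⟨-v, hnvSM⟩ else ⟨redVec d M (s.val - v), hmem3 s h⟩ with hψ
  have hψφ : ∀ s, ψ (φ s) = s := by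
    intro s
    by_cases h : s.val = -v
    · have e1 : φ s = ⟨v, hvSM⟩ := by rw [hφ]; exact dif_pos h
      rw [e1, hψ]
      simp only [dif_pos rfl]
      exact Subtype.ext h.symm
    · have e1 : φ s = ⟨redVec d M (s.val + v), hmem1 s h⟩ := by rw [hφ]; exact dif_neg h
      rw [e1, hψ]
      simp only [dif_neg (hne2 s)]
      apply Subtype.ext
      show redVec d M (redVec d M (s.val + v) - v) = s.val
      rw [sub_eq_add_neg, redVec_add_redVec', add_neg_cancel_right,
        redVec_id' d M (Finset.mem_of_mem_erase s.2)]
  have hφψ : ∀ s, φ (ψ s) = s := by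
    intro s
    by_cases h : s.val = v
    · have e1 : ψ s = ⟨-v, hnvSM⟩ := by rw [hψ]; exact dif_pos h
      rw [e1, hφ]
      simp only [dif_pos rfl]
      exact Subtype.ext h.symm
    · have e1 : ψ s = ⟨redVec d M (s.val - v), hmem3 s h⟩ := by rw [hψ]; exact dif_neg h
      rw [e1, hφ]
      simp only [dif_neg (hne4 s)]
      apply Subtype.ext
      show redVec d M (redVec d M (s.val - v) + v) = s.val
      rw [redVec_add_redVec', sub_add_cancel,
        redVec_id' d M (Finset.mem_of_mem_erase s.2)]
  have hbij : Function.Bijective φ :=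
    Function.bijective_iff_has_inverse.mpr ⟨ψ, hψφ, hφψ⟩
  -- the new rank-1 factors
  refine ⟨fun k s t => R k (ψ s) (if s.val = v then 0 else t), fun η => ?_⟩
  simp only
  rw [hR]
  refine Finset.sum_congr rfl fun k _ => ?_
  refine Fintype.prod_bijective φ hbij _ _ fun s => ?_
  rw [hψφ]
  congr 1
  -- key pointwise identity
  by_cases h : s.val = -v
  · have e1 : φ s = ⟨v, hvSM⟩ := by rw [hφ]; exact dif_pos h
    rw [e1]
    simp only [if_pos rfl]
    show shift η v s = 0
    simp [shift, h]
  · have e1 : φ s = ⟨redVec d M (s.val + v), hmem1 s h⟩ := by rw [hφ]; exact dif_neg h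
    rw [e1]
    simp only [if_neg (hne2 s)]
    show shift η v s = η ⟨redVec d M (s.val + v), hmem1 s h⟩
    have hr0 : redVec d M (s.val + v) ≠ 0 := (Finset.mem_erase.mp (hmem1 s h)).1
    simp only [shift, if_neg h, extCfg, dif_neg hr0]

end SelfDiffusion
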